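/- arXiv:2310.01367 — 2 statements merged into one kernel-verified Lean document; each statement's English description precedes it below -/
import Mathlib

section
/- Let ℙ and ℚ be stationary probability measures on Ω with ℚ ergodic. If there exists k ∈ ℕ and a ∈ 𝒜^k with ℚ[a] > 0 and ℙ[a] = 0, then for ℚ-almost every y and every x ∈ supp ℙ one has liminf_{N→∞} c_N(y|x)/N > 0, and consequently Q̂_N(y,x) → ∞ as N → ∞. -/
open MeasureTheory Filter Asymptotics
open scoped ENNReal Classical

noncomputable section

namespace ZM

/-- The left shift on one-sided sequences. -/
def shift {A : Type*} (x : ℕ → A) : ℕ → A := fun k => x (k + 1)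

/-- The cylinder set of all sequences starting with the word `a`. -/
def cyl {A : Type*} {n : ℕ} (a : Fin n → A) : Set (ℕ → A) := {x | ∀ i : Fin n, x i = a i}

/-- The word `x_{p+1}^{p+ℓ}` of `x` (0-based: the letters at positions `p, …, p+ℓ-1`). -/
def seg {A : Type*} (y : ℕ → A) (p ℓ : ℕ) : Fin ℓ → A := fun i => y (p + i)

/-- `w` occurs in `x` at (0-based) offset `r`. -/
def matchAt {A : Type*} (x : ℕ → A) {ℓ : ℕ} (w : Fin ℓ → A) (r : ℕ) : Prop :=
  ∀ i : Fin ℓ, x (r + i) = w i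

/-- `w` appears as a substring of `x_1^N`. -/
def appears {A : Type*} (N : ℕ) (x : ℕ → A) {ℓ : ℕ} (w : Fin ℓ → A) : Prop :=
  ∃ r, r + ℓ ≤ N ∧ matchAt x w r

/-- The waiting time `W_ℓ(w, x)`: the least (1-based) position at which `w` occurs in `x`,
`⊤` if `w` never occurs. -/
def W {A : Type*} {ℓ : ℕ} (w : Fin ℓ → A) (x : ℕ → A) : ℕ∞ :=
  sInf {r : ℕ∞ | ∃ n : ℕ, r = (n : ℕ∞) ∧ 1 ≤ n ∧ matchAt x w (n - 1)}

section ZMparsing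

variable {A : Type*}

/-- Length of the Ziv–Merhav word starting at (0-based) position `p` of `y_1^N`, with
database `x_1^N`: the longest prefix of the remaining portion of `y_1^N` appearing as a
substring of `x_1^N`, or a single letter if there is no such prefix. -/
def zmLen (N : ℕ) (x y : ℕ → A) (p : ℕ) : ℕ :=
  max 1 (sSup {ℓ | p + ℓ ≤ N ∧ appears N x (seg y p ℓ)})

/-- Starting position of the `j`-th (0-based) word of the Ziv–Merhav parsing. -/
def zmPos (N : ℕ) (x y : ℕ → A) : ℕ → ℕ
  | 0 => 0
  | j + 1 => zmPos N x y j + zmLen N x y (zmPos N x y j)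

/-- `c_N(y|x)`: the number of words in the Ziv–Merhav parsing of `y_1^N` w.r.t. `x_1^N`. -/
def cN (N : ℕ) (x y : ℕ → A) : ℕ := sInf {c | N ≤ zmPos N x y c}

/-- The Ziv–Merhav estimator `Q̂_N(y, x) = c_N(y|x) ln N / N`. -/
def ZMest (N : ℕ) (x y : ℕ → A) : ℝ := (cN N x y : ℝ) * Real.log N / N

end ZMparsing

section MeasureDefs

variable {A : Type*} [MeasurableSpace A]

/-- The measure of the cylinder of a word, as a real number. -/
def wp (μ : Measure (ℕ → A)) {n : ℕ} (a : Fin n → A) : ℝ := (μ (cyl a)).toReal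

/-- `supp ℙ`: the set of sequences all of whose prefixes have positive measure. -/
def suppSet (μ : Measure (ℕ → A)) : Set (ℕ → A) := {x | ∀ n, 0 < μ (cyl (seg x 0 n))}

/-- Condition (ID): immediate decoupling on the support, with sequence `k`. -/
def CondID (μ : Measure (ℕ → A)) (k : ℕ → ℝ) : Prop :=
  Monotone k ∧ (k =o[atTop] fun n => (n : ℝ)) ∧
    ∀ (n m : ℕ) (a : Fin n → A) (b : Fin m → A), 0 < μ (cyl a) → 0 < μ (cyl b) →
      wp μ (Fin.append a b) ≤ Real.exp (k n) * (wp μ a * wp μ b) ∧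
      (0 < μ (cyl (Fin.append a b)) →
        Real.exp (-k n) * (wp μ a * wp μ b) ≤ wp μ (Fin.append a b))

/-- Condition (FE): fast enough decay, with rate `γp < 0`. -/
def CondFE (μ : Measure (ℕ → A)) (γp : ℝ) : Prop :=
  γp < 0 ∧ ∀ᶠ n : ℕ in atTop, ∀ a : Fin n → A, 0 < μ (cyl a) → wp μ a ≤ Real.exp (γp * n)

/-- Condition (SE): slow enough decay, with rate `γm < 0`. -/
def CondSE (μ : Measure (ℕ → A)) (γm : ℝ) : Prop :=
  γm < 0 ∧ ∀ᶠ n : ℕ in atTop, ∀ a : Fin n → A, 0 < μ (cyl a) → Real.exp (γm * n) ≤ wp μ a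

/-- Condition (KB): Kontoyiannis' bound on waiting times, with sequences `k`, `τ`. -/
def CondKB (μ : Measure (ℕ → A)) (k τ : ℕ → ℝ) : Prop :=
  (k =o[atTop] fun n => (n : ℝ)) ∧ (τ =o[atTop] fun n => (n : ℝ)) ∧
    ∀ (ℓ : ℕ) (a : Fin ℓ → A) (r : ℕ),
      (μ {x | (r : ℕ∞) ≤ W a x}).toReal ≤
        Real.exp (-(Real.exp (-k ℓ) * wp μ a * (⌊((r : ℝ) - 1) / ((ℓ : ℝ) + τ ℓ)⌋ : ℝ)))

/-- Length of the next word of the auxiliary parsing of `y_1^N` starting at position `p`: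
the shortest prefix of the remaining portion of `y_1^N` with measure at most `θ`, or the
whole remaining portion if there is no such prefix. -/
def auxLen (μ : Measure (ℕ → A)) (θ : ℝ) (N : ℕ) (y : ℕ → A) (p : ℕ) : ℕ :=
  if ∃ ℓ, 1 ≤ ℓ ∧ p + ℓ ≤ N ∧ wp μ (seg y p ℓ) ≤ θ then
    sInf {ℓ | 1 ≤ ℓ ∧ p + ℓ ≤ N ∧ wp μ (seg y p ℓ) ≤ θ}
  else N - p

/-- Starting position of the `j`-th (0-based) word of the auxiliary parsing. -/
def auxPos (μ : Measure (ℕ → A)) (θ : ℝ) (N : ℕ) (y : ℕ → A) : ℕ → ℕ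
  | 0 => 0
  | j + 1 => auxPos μ θ N y j + max 1 (auxLen μ θ N y (auxPos μ θ N y j))

/-- Length of the `j`-th (0-based) word of the auxiliary parsing. -/
def auxWordLen (μ : Measure (ℕ → A)) (θ : ℝ) (N : ℕ) (y : ℕ → A) (j : ℕ) : ℕ :=
  max 1 (auxLen μ θ N y (auxPos μ θ N y j))

/-- The number of words in the auxiliary parsing of `y_1^N`. -/
def auxCount (μ : Measure (ℕ → A)) (θ : ℝ) (N : ℕ) (y : ℕ → A) : ℕ :=
  sInf {c | N ≤ auxPos μ θ N y c}

/-- Length of the next word of the block parsing within a block ending at position `e`: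
the shortest prefix of the remaining portion of the block with measure at most `θ`;
`0` encodes that no such prefix exists (the rest of the block is the buffer). -/
def blkLen (μ : Measure (ℕ → A)) (θ : ℝ) (e : ℕ) (y : ℕ → A) (p : ℕ) : ℕ :=
  sInf {ℓ | 1 ≤ ℓ ∧ p + ℓ ≤ e ∧ wp μ (seg y p ℓ) ≤ θ}

/-- Starting position of the `i`-th (0-based) word of the block starting at `q`, ending at `e`. -/
def blkPos (μ : Measure (ℕ → A)) (θ : ℝ) (e : ℕ) (y : ℕ → A) (q : ℕ) : ℕ → ℕ
  | 0 => q
  | i + 1 => blkPos μ θ e y q i + blkLen μ θ e y (blkPos μ θ e y q i)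

/-- Number `d_s` of words in the block starting at `q` and ending at `e`. -/
def dCount (μ : Measure (ℕ → A)) (θ : ℝ) (e : ℕ) (y : ℕ → A) (q : ℕ) : ℕ :=
  sInf {i | blkLen μ θ e y (blkPos μ θ e y q i) = 0}

/-- The block starting at `q` and ending at `e` is good: its parsed words are pairwise
distinct. -/
def GoodBlock (μ : Measure (ℕ → A)) (θ : ℝ) (e : ℕ) (y : ℕ → A) (q : ℕ) : Prop :=
  ∀ i j : ℕ, i < dCount μ θ e y q → j < dCount μ θ e y q →
    blkLen μ θ e y (blkPos μ θ e y q i) = blkLen μ θ e y (blkPos μ θ e y q j) →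
    (∀ t < blkLen μ θ e y (blkPos μ θ e y q i),
      y (blkPos μ θ e y q i + t) = y (blkPos μ θ e y q j + t)) →
    i = j

end MeasureDefs

/-- The block length `⌊N^α⌋`. -/
def blockB (N : ℕ) (α : ℝ) : ℕ := ⌊(N : ℝ) ^ α⌋₊

/-- The number `M_N` of blocks. -/
def blockM (N : ℕ) (α : ℝ) : ℕ := (N + blockB N α - 1) / blockB N α

/-- The starting position of the `s`-th (0-based) block. -/
def blockStart (N : ℕ) (α : ℝ) (s : ℕ) : ℕ := s * blockB N α

/-- The end position of the `s`-th (0-based) block. -/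
def blockEnd (N : ℕ) (α : ℝ) (s : ℕ) : ℕ := min ((s + 1) * blockB N α) N

/-- `S_b(y_1^N)`: the set of bad blocks of the block auxiliary parsing (with threshold
`N^{-1-ε}`, word probabilities computed with `μ`). -/
def badSet {A : Type*} [MeasurableSpace A] (μ : Measure (ℕ → A)) (N : ℕ) (α ε : ℝ)
    (y : ℕ → A) : Set ℕ :=
  {s | s < blockM N α ∧
    ¬ GoodBlock μ ((N : ℝ) ^ (-1 - ε)) (blockEnd N α s) y (blockStart N α s)}

/-- `ℓ₋ = ln N / (-2 γ₋)`. -/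
def ellMinus (N : ℕ) (γm : ℝ) : ℝ := Real.log N / (-2 * γm)

/-- `ℓ₊ = 2 ln N / (-γ₊)`. -/
def ellPlus (N : ℕ) (γp : ℝ) : ℝ := 2 * Real.log N / (-γp)

/-- `d₊ = 2 N^α / ℓ₋`. -/
def dPlus (N : ℕ) (α γm : ℝ) : ℝ := 2 * (N : ℝ) ^ α / ellMinus N γm

section CrossEntropy

variable {A : Type*} [MeasurableSpace A] [Fintype A]

/-- The `n`-th cross-entropy average `-(1/n) ∑_{a ∈ 𝒜ⁿ} ℚ[a] ln ℙ[a]`, real-valued version. -/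
def hcSeq (μP μQ : Measure (ℕ → A)) (n : ℕ) : ℝ :=
  -(1 / (n : ℝ)) * ∑ a : Fin n → A, wp μQ a * Real.log (wp μP a)

/-- `-ln p` as an element of `[0, ∞]`, for `p ∈ [0, 1]`; equals `⊤` when `p = 0`. -/
def negLog (p : ℝ≥0∞) : ℝ≥0∞ := if p = 0 then ⊤ else ENNReal.ofReal (-Real.log p.toReal)

/-- The `n`-th cross-entropy average, `[0, ∞]`-valued version. -/
def hcSeqE (μP μQ : Measure (ℕ → A)) (n : ℕ) : ℝ≥0∞ :=
  (∑ a : Fin n → A, μQ (cyl a) * negLog (μP (cyl a))) / (n : ℝ≥0∞)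

end CrossEntropy

end ZM

/-!
A word `a` with `ℙ[a] = 0` never occurs in a point `x ∈ supp ℙ`: an occurrence at offset `r`
would make the positive-measure cylinder `[x_1^{r+k}]` lie inside the `ℙ`-null set `T^{-r}[a]`.
A Ziv–Merhav word of `y` of length at least two is a substring of `x`, so every occurrence of
`a` in `y_1^N` must start within `k` positions of the end of some word, and `y_1^N` contains at
most `k · c_N(y|x)` occurrences of `a`. Ergodicity of `ℚ` makes these occurrences have positive
lower density for `ℚ`-a.e. `y`, whence `c_N(y|x) ≥ δ N` and `Q̂_N(y,x) ≥ δ ln N`.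

Positive lower density comes from the Katznelson–Weiss argument: the set of points whose
visits have zero lower density is forward invariant, hence null or conull by ergodicity; if it
were conull, cutting orbits into blocks of bounded length with few visits would bound `ℚ[a]` by
an arbitrarily small quantity.
-/

theorem mem_measurableAtom_pi {ι : Type*} {X : ι → Type*} [∀ i, MeasurableSpace (X i)]
    {w z : ∀ i, X i} (h : ∀ i, z i ∈ measurableAtom (w i)) : z ∈ measurableAtom w := by
  have key : ∀ s, MeasurableSet s → (w ∈ s ↔ z ∈ s) := by
    intro s hs
    rw [MeasurableSpace.pi_eq_generateFrom_projections] at hs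
    induction s, hs using MeasurableSpace.generateFrom_induction with
    | hC t ht =>
      obtain ⟨i, U, hU, rfl⟩ := ht
      have hw : w i ∈ measurableAtom (z i) :=
        measurableAtom_eq_of_mem (h i) ▸ mem_measurableAtom_self _
      exact ⟨mem_of_mem_measurableAtom (h i) hU, mem_of_mem_measurableAtom hw hU⟩
    | empty => simp
    | compl t _ iht => exact not_congr iht
    | iUnion f _ ih => simp only [Set.mem_iUnion]; exact exists_congr ih
  simp only [measurableAtom, Set.mem_iInter]
  exact fun s hw hs => (key s hs).1 hw

section BirkhoffSum

variable {α : Type*} {T : α → α}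

theorem birkhoffSum_indicator_one {M : Type*} [AddCommMonoidWithOne M] (T : α → α)
    (E : Set α) (n : ℕ) (y : α) :
    birkhoffSum T (E.indicator 1) n y =
      (((Finset.range n).filter fun k => T^[k] y ∈ E).card : M) := by
  simp [birkhoffSum, Set.indicator_apply, Finset.sum_boole]

theorem birkhoffSum_le_birkhoffSum_of_le (T : α → α) (g : α → ℝ≥0∞) {m n : ℕ} (hmn : m ≤ n)
    (y : α) : birkhoffSum T g m y ≤ birkhoffSum T g n y :=
  Finset.sum_le_sum_of_subset (Finset.range_subset_range.2 hmn)

theorem birkhoffSum_le_of_forall_block {g h : α → ℝ≥0∞} {ε : ℝ≥0∞} {len : α → ℕ} {M : ℕ}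
    (hlen : ∀ z, 1 ≤ len z ∧ len z ≤ M)
    (hblock : ∀ z, birkhoffSum T g (len z) z ≤ ε * len z + h z) (n : ℕ) (y : α) :
    birkhoffSum T g n y ≤ ε * (n + M) + birkhoffSum T h (n + M) y := by
  induction n using Nat.strong_induction_on generalizing y with
  | _ n ih =>
  set L := len y
  obtain ⟨hL1, hLM⟩ : 1 ≤ L ∧ L ≤ M := hlen y
  have hfirst : birkhoffSum T g L y ≤ ε * L + birkhoffSum T h L y := by
    refine (hblock y).trans (add_le_add le_rfl ?_)
    simpa [birkhoffSum_one] using birkhoffSum_le_birkhoffSum_of_le T h hL1 y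
  by_cases hnL : n ≤ L
  · calc birkhoffSum T g n y ≤ birkhoffSum T g L y := birkhoffSum_le_birkhoffSum_of_le T g hnL y
      _ ≤ ε * L + birkhoffSum T h L y := hfirst
      _ ≤ ε * (n + M) + birkhoffSum T h (n + M) y := by
        gcongr
        · exact_mod_cast hLM.trans (Nat.le_add_left M n)
        · exact birkhoffSum_le_birkhoffSum_of_le T h (by omega) y
  · obtain ⟨r, rfl⟩ : ∃ r, n = L + r := ⟨n - L, by omega⟩
    calc birkhoffSum T g (L + r) y = birkhoffSum T g L y + birkhoffSum T g r (T^[L] y) :=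
          birkhoffSum_add T g L r y
      _ ≤ (ε * L + birkhoffSum T h L y) + (ε * (r + M) + birkhoffSum T h (r + M) (T^[L] y)) :=
          add_le_add hfirst (ih r (by omega) (T^[L] y))
      _ = ε * ((L + r : ℕ) + M) + birkhoffSum T h (L + r + M) y := by
          rw [add_assoc L r M, birkhoffSum_add T h L (r + M) y]
          push_cast
          ring

def zeroLowerDensitySet (T : α → α) (g : α → ℝ≥0∞) : Set α :=
  {y | ∀ n : ℕ, ∃ᶠ N : ℕ in atTop, n * birkhoffSum T g N y < N}

theorem zeroLowerDensitySet_subset_preimage {g : α → ℝ≥0∞} :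
    zeroLowerDensitySet T g ⊆ T ⁻¹' zeroLowerDensitySet T g := by
  intro y hy n
  refine frequently_atTop.2 fun a => ?_
  obtain ⟨M, hM, hlt⟩ := frequently_atTop.1 (hy (2 * n)) (a + 2)
  obtain ⟨N, rfl⟩ : ∃ N, M = N + 1 := ⟨M - 1, by omega⟩
  refine ⟨N, by omega, lt_of_mul_lt_mul_left (a := 2) ?_ zero_le⟩
  have hle : birkhoffSum T g N (T y) ≤ birkhoffSum T g (N + 1) y := by
    rw [birkhoffSum_succ']
    exact le_add_self
  calc 2 * (n * birkhoffSum T g N (T y))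
      ≤ ((2 * n : ℕ) : ℝ≥0∞) * birkhoffSum T g (N + 1) y := by
        push_cast
        rw [mul_assoc]
        gcongr
    _ < (N + 1 : ℕ) := hlt
    _ ≤ 2 * N := by exact_mod_cast (by omega : N + 1 ≤ 2 * N)

end BirkhoffSum

section LowerDensity

variable {Ω : Type*} [MeasurableSpace Ω] {μ : Measure Ω} {T : Ω → Ω} {g : Ω → ℝ≥0∞}

theorem measurable_birkhoffSum (hT : Measurable T) (hg : Measurable g) (n : ℕ) :
    Measurable (birkhoffSum T g n) :=
  Finset.measurable_sum _ fun k _ => hg.comp (hT.iterate k)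

theorem MeasureTheory.MeasurePreserving.lintegral_birkhoffSum (hT : MeasurePreserving T μ μ)
    (hg : Measurable g) (n : ℕ) : ∫⁻ y, birkhoffSum T g n y ∂μ = n * ∫⁻ y, g y ∂μ := by
  simp only [birkhoffSum]
  rw [lintegral_finsetSum (f := fun k y => g (T^[k] y)) _ fun k _ =>
    hg.comp (hT.measurable.iterate k)]
  simp [(hT.iterate _).lintegral_comp hg]

/-- The Katznelson–Weiss estimate: orbits are cut into blocks of length at most `M` on which the
average of `g` is below `1 / n`, except for single steps at the points of `B`. -/
theorem MeasureTheory.MeasurePreserving.mul_lintegral_le_of_forall_notMem_exists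
    [IsProbabilityMeasure μ] (hT : MeasurePreserving T μ μ) (hg : Measurable g)
    (hg1 : ∀ z, g z ≤ 1) {n M : ℕ} (hM : 1 ≤ M) {B : Set Ω} (hB : MeasurableSet B)
    (hgood : ∀ z ∉ B, ∃ m, (1 ≤ m ∧ m ≤ M) ∧ n * birkhoffSum T g m z < m) :
    M * ∫⁻ y, g y ∂μ ≤ (n : ℝ≥0∞)⁻¹ * (M + M) + (M + M) * μ B := by
  let len : Ω → ℕ := fun z => if hz : z ∈ B then 1 else Nat.find (hgood z hz)
  have hlen : ∀ z, 1 ≤ len z ∧ len z ≤ M := by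
    intro z
    simp only [len]
    split_ifs with hz
    · exact ⟨le_rfl, hM⟩
    · exact (Nat.find_spec (hgood z hz)).1
  have hblock : ∀ z, birkhoffSum T g (len z) z ≤ (n : ℝ≥0∞)⁻¹ * len z + B.indicator 1 z := by
    intro z
    simp only [len]
    split_ifs with hz
    · simpa [birkhoffSum_one, Set.indicator_of_mem hz] using (hg1 z).trans le_add_self
    · refine le_add_right ?_
      set m := Nat.find (hgood z hz)
      obtain ⟨⟨hm1, -⟩, hlt⟩ := Nat.find_spec (hgood z hz)
      rcases eq_or_ne n 0 with rfl | hn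
      · simp [ENNReal.top_mul (by exact_mod_cast (by omega : m ≠ 0) : (m : ℝ≥0∞) ≠ 0)]
      · calc birkhoffSum T g m z = (n : ℝ≥0∞)⁻¹ * (n * birkhoffSum T g m z) :=
              (ENNReal.inv_mul_cancel_left (by exact_mod_cast hn) (by simp)).symm
          _ ≤ (n : ℝ≥0∞)⁻¹ * m := by gcongr
  calc (M : ℝ≥0∞) * ∫⁻ y, g y ∂μ = ∫⁻ y, birkhoffSum T g M y ∂μ :=
        (hT.lintegral_birkhoffSum hg M).symm
    _ ≤ ∫⁻ y, ((n : ℝ≥0∞)⁻¹ * (M + M) + birkhoffSum T (B.indicator 1) (M + M) y) ∂μ :=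
        lintegral_mono (birkhoffSum_le_of_forall_block hlen hblock M)
    _ = (n : ℝ≥0∞)⁻¹ * (M + M) + (M + M) * μ B := by
        rw [lintegral_add_left measurable_const, lintegral_const, measure_univ, mul_one,
          hT.lintegral_birkhoffSum (measurable_one.indicator hB), lintegral_indicator_one hB]
        push_cast
        ring

theorem measurableSet_zeroLowerDensitySet (hT : Measurable T) (hg : Measurable g) :
    MeasurableSet (zeroLowerDensitySet T g) := by
  have : zeroLowerDensitySet T g =
      ⋂ n : ℕ, limsup (fun N : ℕ => {y | n * birkhoffSum T g N y < N}) atTop := by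
    ext y
    simp [zeroLowerDensitySet, mem_limsup_iff_frequently_mem]
  rw [this]
  exact MeasurableSet.iInter fun n => MeasurableSet.measurableSet_limsup fun N =>
    measurableSet_lt (measurable_const.mul (measurable_birkhoffSum hT hg N)) measurable_const

theorem MeasureTheory.MeasurePreserving.measure_compl_zeroLowerDensitySet_ne_zero
    [IsProbabilityMeasure μ] (hT : MeasurePreserving T μ μ) (hg : Measurable g)
    (hg1 : ∀ z, g z ≤ 1) (hg0 : ∫⁻ y, g y ∂μ ≠ 0) : μ (zeroLowerDensitySet T g)ᶜ ≠ 0 := by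
  intro hZc
  set c := (∫⁻ y, g y ∂μ) / 4
  have hc : 0 < c := ENNReal.div_pos hg0 (by norm_num)
  obtain ⟨n, hn⟩ := ENNReal.exists_inv_nat_lt hc.ne'
  set B : ℕ → Set Ω := fun M => {z | ∀ m ∈ Finset.Icc 1 M, (m : ℝ≥0∞) ≤ n * birkhoffSum T g m z}
  have hBm : ∀ M, MeasurableSet (B M) := fun M => by
    simp only [B, Set.ofPred_forall]
    exact Finset.measurableSet_biInter _ fun m _ => measurableSet_le measurable_const
      (measurable_const.mul (measurable_birkhoffSum hT.measurable hg m))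
  have hBanti : Antitone B := fun M M' hMM' z hz m hm =>
    hz m (Finset.Icc_subset_Icc_right hMM' hm)
  have hBinter : μ (⋂ M, B M) = 0 := by
    refine measure_mono_null (fun z hz => ?_) hZc
    intro hzZ
    obtain ⟨N, hlt, hN⟩ := ((hzZ n).and_eventually (eventually_ge_atTop 1)).exists
    exact (Set.mem_iInter.1 hz N N (Finset.mem_Icc.2 ⟨hN, le_rfl⟩)).not_gt hlt
  have hlim := tendsto_measure_iInter_atTop (fun M => (hBm M).nullMeasurableSet) hBanti
    ⟨0, measure_ne_top μ _⟩
  rw [hBinter] at hlim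
  obtain ⟨M, hMc, hM⟩ := ((hlim.eventually (gt_mem_nhds hc)).and (eventually_ge_atTop 1)).exists
  have hMM0 : ((M : ℝ≥0∞) + M) ≠ 0 := by norm_cast; omega
  have hMMtop : ((M : ℝ≥0∞) + M) ≠ ⊤ := by simp
  have hKW := hT.mul_lintegral_le_of_forall_notMem_exists hg hg1 (n := n) hM (hBm M)
    fun z hz => by simpa [B, and_assoc] using hz
  refine (hKW.trans_lt ?_).ne rfl
  calc (n : ℝ≥0∞)⁻¹ * (M + M) + (M + M) * μ (B M) < c * (M + M) + (M + M) * c :=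
        ENNReal.add_lt_add (ENNReal.mul_lt_mul_left hMM0 hMMtop hn)
          (ENNReal.mul_lt_mul_right hMM0 hMMtop hMc)
    _ = M * (4 * c) := by ring
    _ = M * ∫⁻ y, g y ∂μ := by rw [ENNReal.mul_div_cancel (by norm_num) (by norm_num)]

theorem Ergodic.ae_exists_le_mul_birkhoffSum [IsProbabilityMeasure μ] (hT : Ergodic T μ)
    (hg : Measurable g) (hg1 : ∀ z, g z ≤ 1) (hg0 : ∫⁻ y, g y ∂μ ≠ 0) :
    ∀ᵐ y ∂μ, ∃ n : ℕ, ∀ᶠ N : ℕ in atTop, (N : ℝ≥0∞) ≤ n * birkhoffSum T g N y := by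
  have hZ : μ (zeroLowerDensitySet T g) = 0 := by
    refine ae_eq_empty.1 <| (hT.ae_empty_or_univ_of_ae_le_preimage
      (measurableSet_zeroLowerDensitySet hT.measurable hg).nullMeasurableSet
      (Eventually.of_forall zeroLowerDensitySet_subset_preimage)).resolve_right fun h => ?_
    exact hT.toMeasurePreserving.measure_compl_zeroLowerDensitySet_ne_zero hg hg1 hg0
      (ae_eq_univ.1 h)
  filter_upwards [measure_eq_zero_iff_ae_notMem.1 hZ] with y hy
  simpa [zeroLowerDensitySet, not_frequently] using hy

end LowerDensity

section LinearGrowth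

variable {u : ℕ → ℝ} {c : ℝ}

theorem eventually_inv_le_div_of_le_mul (hc : 0 < c)
    (h : ∀ᶠ N : ℕ in atTop, (N : ℝ) ≤ c * u N) : ∀ᶠ N : ℕ in atTop, c⁻¹ ≤ u N / N := by
  filter_upwards [h, eventually_gt_atTop 0] with N hN hN0
  rw [inv_le_iff_one_le_mul₀ hc, div_mul_eq_mul_div, le_div_iff₀ (by exact_mod_cast hN0),
    one_mul, mul_comm]
  exact hN

theorem liminf_div_pos_of_le_mul (hu : ∀ N, u N ≤ N) (hc : 0 < c)
    (h : ∀ᶠ N : ℕ in atTop, (N : ℝ) ≤ c * u N) : 0 < liminf (fun N : ℕ => u N / N) atTop := by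
  have hbdd : IsBoundedUnder (· ≤ ·) atTop fun N : ℕ => u N / N :=
    isBoundedUnder_of ⟨1, fun N => div_le_one_of_le₀ (hu N) N.cast_nonneg⟩
  exact (inv_pos.2 hc).trans_le
    (le_liminf_of_le hbdd.isCoboundedUnder_ge (eventually_inv_le_div_of_le_mul hc h))

theorem tendsto_mul_log_div_atTop_of_le_mul (hc : 0 < c)
    (h : ∀ᶠ N : ℕ in atTop, (N : ℝ) ≤ c * u N) :
    Tendsto (fun N : ℕ => u N * Real.log N / N) atTop atTop := by
  refine tendsto_atTop_mono' atTop ?_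
    ((Real.tendsto_log_atTop.comp tendsto_natCast_atTop_atTop).const_mul_atTop (inv_pos.2 hc))
  filter_upwards [eventually_inv_le_div_of_le_mul hc h, eventually_ge_atTop 1] with N hN hN1
  rw [Function.comp_apply, mul_div_right_comm]
  exact mul_le_mul_of_nonneg_right hN (Real.log_nonneg (by exact_mod_cast hN1))

end LinearGrowth

namespace ZM

section

variable {A : Type*}

theorem shift_iterate_apply (x : ℕ → A) (r j : ℕ) : (shift^[r] x) j = x (j + r) := by
  induction r generalizing x with
  | zero => rfl
  | succ r ih => rw [Function.iterate_succ_apply, ih]; rfl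

section AtomCylinder

variable [MeasurableSpace A]

/-- The σ-algebra of `A` need not separate points, so `cyl a` need not be measurable;
`atomCyl a` is a measurable cylinder with the same outer measure (`measure_atomCyl`). -/
def atomCyl {n : ℕ} (a : Fin n → A) : Set (ℕ → A) :=
  {z | ∀ i : Fin n, z i ∈ measurableAtom (a i)}

theorem measurableSet_atomCyl [Countable A] {n : ℕ} (a : Fin n → A) :
    MeasurableSet (atomCyl a) := by
  simp only [atomCyl, Set.ofPred_forall]
  exact MeasurableSet.iInter fun i =>
    measurable_pi_apply _ (MeasurableSet.measurableAtom_of_countable (a i))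

theorem cyl_subset_atomCyl {n : ℕ} (a : Fin n → A) : cyl a ⊆ atomCyl a :=
  fun _ hz i => hz i ▸ mem_measurableAtom_self (a i)

theorem measure_atomCyl (μ : Measure (ℕ → A)) {n : ℕ} (a : Fin n → A) :
    μ (atomCyl a) = μ (cyl a) := by
  refine le_antisymm ?_ (measure_mono (cyl_subset_atomCyl a))
  suffices atomCyl a ⊆ toMeasurable μ (cyl a) from
    (measure_mono this).trans_eq (measure_toMeasurable _)
  intro z hz
  let w : ℕ → A := fun j => if hj : j < n then a ⟨j, hj⟩ else z j
  have hw : w ∈ cyl a := fun i => dif_pos i.isLt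
  refine mem_of_mem_measurableAtom (mem_measurableAtom_pi fun j => ?_)
    (measurableSet_toMeasurable μ _) (subset_toMeasurable μ _ hw)
  by_cases hj : j < n
  · simpa [w, hj] using hz ⟨j, hj⟩
  · simp [w, hj]

theorem dependsOn_atomCyl {n : ℕ} (a : Fin n → A) :
    DependsOn (· ∈ atomCyl a) (Set.Iio n) := by
  intro z z' h
  simp only [atomCyl, Set.mem_ofPred_eq]
  exact propext (forall_congr' fun i : Fin n => by rw [h i i.isLt])

end AtomCylinder

theorem shift_iterate_notMem_of_mem_suppSet [MeasurableSpace A] {μ : Measure (ℕ → A)}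
    (hμ : MeasurePreserving shift μ μ) {E : Set (ℕ → A)} (hE : MeasurableSet E) (hE0 : μ E = 0)
    {k : ℕ} (hEk : DependsOn (· ∈ E) (Set.Iio k)) {x : ℕ → A} (hx : x ∈ suppSet μ) (r : ℕ) :
    shift^[r] x ∉ E := by
  intro hxE
  have hsub : cyl (seg x 0 (r + k)) ⊆ shift^[r] ⁻¹' E := by
    intro z hz
    refine (hEk (x := shift^[r] x) (y := shift^[r] z) fun i hi => ?_).mp hxE
    have := hz ⟨i + r, by have := Set.mem_Iio.1 hi; omega⟩
    simp only [seg, zero_add] at this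
    simp [shift_iterate_apply, this]
  refine (hx (r + k)).ne' (measure_mono_null hsub ?_)
  rw [(hμ.iterate r).measure_preimage hE.nullMeasurableSet, hE0]

section Parsing

variable (N : ℕ) (x y : ℕ → A)

theorem zmLen_pos (p : ℕ) : 0 < zmLen N x y p :=
  lt_max_of_lt_left one_pos

theorem strictMono_zmPos : StrictMono (zmPos N x y) :=
  strictMono_nat_of_lt_succ fun _ => Nat.lt_add_of_pos_right (zmLen_pos N x y _)

theorem cN_le : cN N x y ≤ N :=
  Nat.sInf_le (strictMono_zmPos N x y).le_apply

theorem le_zmPos_cN : N ≤ zmPos N x y (cN N x y) :=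
  Nat.sInf_mem (s := {c | N ≤ zmPos N x y c}) ⟨N, (strictMono_zmPos N x y).le_apply⟩

variable {N x y}

theorem exists_zmPos_le_lt_zmPos_succ {q : ℕ} (hq : q < N) :
    ∃ j < cN N x y, zmPos N x y j ≤ q ∧ q < zmPos N x y (j + 1) := by
  have hex : ∃ j, q < zmPos N x y j := ⟨q + 1, (strictMono_zmPos N x y).le_apply⟩
  obtain ⟨j, hj⟩ : ∃ j, Nat.find hex = j + 1 :=
    Nat.exists_eq_add_one_of_ne_zero fun h0 => by simpa [zmPos, h0] using Nat.find_spec hex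
  have hlt : q < zmPos N x y (j + 1) := hj ▸ Nat.find_spec hex
  have hle : zmPos N x y j ≤ q := not_lt.1 (Nat.find_min hex (by omega))
  refine ⟨j, ?_, hle, hlt⟩
  by_contra! hj
  have := (strictMono_zmPos N x y).monotone hj
  have := le_zmPos_cN N x y
  omega

theorem exists_matchAt_of_two_le_zmLen {p : ℕ} (hp : 2 ≤ zmLen N x y p) :
    ∃ r, ∀ i < zmLen N x y p, x (r + i) = y (p + i) := by
  set S := {ℓ | p + ℓ ≤ N ∧ appears N x (seg y p ℓ)}
  have hS : zmLen N x y p = sSup S := by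
    have : zmLen N x y p = max 1 (sSup S) := rfl
    omega
  have hSne : S.Nonempty := Set.nonempty_iff_ne_empty.2 fun h0 => by
    rw [h0, csSup_empty, Nat.bot_eq_zero] at hS
    omega
  have hSbdd : BddAbove S := ⟨N, fun ℓ hℓ => by have := hℓ.1; omega⟩
  obtain ⟨-, r, -, hr⟩ := hS ▸ Nat.sSup_mem hSne hSbdd
  exact ⟨r, fun i hi => hr ⟨i, hi⟩⟩

theorem card_filter_shift_iterate_mem_le {E : Set (ℕ → A)} {k : ℕ}
    (hEk : DependsOn (· ∈ E) (Set.Iio k)) (hx : ∀ r, shift^[r] x ∉ E) :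
    ((Finset.range N).filter fun q => shift^[q] y ∈ E).card ≤ k * cN N x y := by
  have hsub : (Finset.range N).filter (fun q => shift^[q] y ∈ E) ⊆
      (Finset.range (cN N x y)).biUnion
        fun j => Finset.Ico (zmPos N x y (j + 1) - k) (zmPos N x y (j + 1)) := by
    intro q hq
    rw [Finset.mem_filter, Finset.mem_range] at hq
    obtain ⟨j, hjc, hjq, hqj⟩ := exists_zmPos_le_lt_zmPos_succ hq.1
    simp only [Finset.mem_biUnion, Finset.mem_range, Finset.mem_Ico]
    refine ⟨j, hjc, ?_, hqj⟩
    by_contra! hlong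
    set p := zmPos N x y j
    have hpL : zmPos N x y (j + 1) = p + zmLen N x y p := rfl
    -- the window `y_q^{q+k-1}` lies inside the `j`-th word, hence occurs in `x`
    obtain ⟨r, hr⟩ : ∃ r, ∀ i < k, x (r + i) = y (q + i) := by
      by_cases hL : 2 ≤ zmLen N x y p
      · obtain ⟨r, hr⟩ := exists_matchAt_of_two_le_zmLen hL
        refine ⟨r + (q - p), fun i hi => ?_⟩
        have := hr (q - p + i) (by omega)
        rwa [← add_assoc, ← add_assoc, show p + (q - p) = q by omega] at this
      · exact ⟨0, fun i hi => by omega⟩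
    refine hx r ((hEk (x := shift^[q] y) (y := shift^[r] x) fun i hi => ?_).mp hq.2)
    simp only [shift_iterate_apply, add_comm i, hr i hi]
  calc ((Finset.range N).filter fun q => shift^[q] y ∈ E).card
      ≤ ∑ j ∈ Finset.range (cN N x y),
          (Finset.Ico (zmPos N x y (j + 1) - k) (zmPos N x y (j + 1))).card :=
        (Finset.card_le_card hsub).trans Finset.card_biUnion_le
    _ ≤ ∑ _j ∈ Finset.range (cN N x y), k :=
        Finset.sum_le_sum fun j _ => by rw [Nat.card_Ico]; omega
    _ = k * cN N x y := by simp [mul_comm]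

end Parsing

end

theorem estimator_diverges_general {A : Type*} [Fintype A] [MeasurableSpace A]
    (μP μQ : Measure (ℕ → A)) [IsProbabilityMeasure μQ]
    (hPstat : MeasurePreserving shift μP μP)
    (hQerg : Ergodic shift μQ)
    (k : ℕ) (a : Fin k → A) (hQa : 0 < μQ (cyl a)) (hPa : μP (cyl a) = 0) :
    ∀ᵐ y ∂μQ, ∀ x ∈ suppSet μP,
      0 < atTop.liminf (fun N => (cN N x y : ℝ) / N) ∧
      Tendsto (fun N => ZMest N x y) atTop atTop := by
  set E := atomCyl a
  have hE : MeasurableSet E := measurableSet_atomCyl a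
  have hvisits := hQerg.ae_exists_le_mul_birkhoffSum (measurable_one.indicator hE)
    (fun z => Set.indicator_apply_le' (fun _ => le_rfl) fun _ => zero_le_one)
    (by rw [lintegral_indicator_one hE, measure_atomCyl]; exact hQa.ne')
  filter_upwards [hvisits] with y ⟨n, hn⟩ x hx
  have hxE := shift_iterate_notMem_of_mem_suppSet hPstat hE
    ((measure_atomCyl μP a).trans hPa) (dependsOn_atomCyl a) hx
  have hcount : ∀ᶠ N : ℕ in atTop, N ≤ n * k * cN N x y := hn.mono fun N hN => by
    rw [birkhoffSum_indicator_one] at hN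
    have hle : (N : ℝ≥0∞) ≤ ((n * k * cN N x y : ℕ) : ℝ≥0∞) := hN.trans <| by
      rw [mul_assoc, Nat.cast_mul]
      gcongr
      exact_mod_cast card_filter_shift_iterate_mem_le (dependsOn_atomCyl a) hxE
    exact_mod_cast hle
  obtain ⟨N, hN, hN0⟩ := (hcount.and (eventually_gt_atTop 0)).exists
  have hc : (0 : ℝ) < n * k := by exact_mod_cast Nat.pos_of_mul_pos_right (hN0.trans_le hN)
  have hcountR : ∀ᶠ N : ℕ in atTop, (N : ℝ) ≤ (n * k) * cN N x y :=
    hcount.mono fun N h => by exact_mod_cast h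
  exact ⟨liminf_div_pos_of_le_mul (fun N => by exact_mod_cast cN_le N x y) hc hcountR,
    tendsto_mul_log_div_atTop_of_le_mul hc hcountR⟩

/-- If `ℚ` is ergodic and some word has positive `ℚ`-measure but zero `ℙ`-measure, then for
`ℚ`-a.e. `y` and every `x ∈ supp ℙ`, `liminf c_N(y|x)/N > 0`, and hence `Q̂_N(y,x) → ∞`. -/
theorem estimator_diverges {A : Type*} [Fintype A] [MeasurableSpace A]
    (μP μQ : Measure (ℕ → A)) [IsProbabilityMeasure μP] [IsProbabilityMeasure μQ]
    (hPstat : MeasurePreserving shift μP μP)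
    (hQerg : Ergodic shift μQ)
    (k : ℕ) (a : Fin k → A) (hQa : 0 < μQ (cyl a)) (hPa : μP (cyl a) = 0) :
    ∀ᵐ y ∂μQ, ∀ x ∈ suppSet μP,
      0 < atTop.liminf (fun N => (cN N x y : ℝ) / N) ∧
      Tendsto (fun N => ZMest N x y) atTop atTop :=
  estimator_diverges_general μP μQ hPstat hQerg k a hQa hPa

end ZM
end
end

section
/- If a stationary probability measure ℙ on Ω satisfies condition ID, then ℙ satisfies condition SE: there exists γ_- < 0 such that inf_{b ∈ supp ℙ_n} ℙ[b] ≥ e^{γ_- n} for all n large enough. -/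
open MeasureTheory Filter Asymptotics
open scoped ENNReal Classical

noncomputable section

namespace ZM

set_option linter.unusedSectionVars false in
private lemma cyl_append {A : Type*} {n : ℕ} (a : Fin (n+1) → A) :
    cyl (Fin.append (fun _ : Fin 1 => a 0) (fun i : Fin n => a i.succ)) = cyl a := by
  ext x
  simp only [cyl, Set.mem_setOf_eq]
  constructor
  · intro h i
    induction i using Fin.cases with
    | zero =>
        have := h (Fin.castAdd n (0 : Fin 1))
        simpa [Fin.append_left] using this
    | succ j =>
        have := h (Fin.natAdd 1 j)
        simp only [Fin.append_right] at this
        simpa [Fin.natAdd, Fin.val_succ, Nat.add_comm] using this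
  · intro h i
    induction i using Fin.addCases with
    | left j =>
        have hj : j = 0 := Subsingleton.elim _ _
        subst hj
        simpa [Fin.append_left] using h 0
    | right j =>
        have := h j.succ
        simp only [Fin.append_right]
        simpa [Fin.natAdd, Fin.val_succ, Nat.add_comm] using this

lemma cyl_head_subset {A : Type*} {n : ℕ} (a : Fin (n+1) → A) :
    cyl a ⊆ cyl (fun _ : Fin 1 => a 0) := by
  intro x hx i
  have := hx 0
  have hi : i = 0 := Subsingleton.elim _ _
  subst hi
  simpa using this

lemma shift_mem_cyl_tail {A : Type*} {n : ℕ} (a : Fin (n+1) → A) {x : ℕ → A} (hx : x ∈ cyl a) :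
    shift x ∈ cyl (fun i : Fin n => a i.succ) := by
  intro i
  have := hx i.succ
  simpa [shift, Fin.val_succ] using this

lemma tail_pos {A : Type*} [MeasurableSpace A] {μ : Measure (ℕ → A)} (hstat : MeasurePreserving shift μ μ)
    {n : ℕ} (a : Fin (n+1) → A) (ha : 0 < μ (cyl a)) :
    0 < μ (cyl (fun i : Fin n => a i.succ)) := by
  have hsub : cyl a ⊆ shift ⁻¹' cyl (fun i : Fin n => a i.succ) :=
    fun x hx => shift_mem_cyl_tail a hx
  calc 0 < μ (cyl a) := ha
    _ ≤ μ (shift ⁻¹' cyl (fun i : Fin n => a i.succ)) := measure_mono hsub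
    _ ≤ (Measure.map shift μ) (cyl (fun i : Fin n => a i.succ)) :=
        Measure.le_map_apply hstat.measurable.aemeasurable _
    _ = μ (cyl (fun i : Fin n => a i.succ)) := by rw [hstat.map_eq]

/-- Condition (ID) implies condition (SE). -/
theorem ID_implies_SE {A : Type*} [Fintype A] [MeasurableSpace A]
    (μ : Measure (ℕ → A)) [IsProbabilityMeasure μ]
    (hstat : MeasurePreserving shift μ μ)
    (k : ℕ → ℝ) (hID : CondID μ k) :
    ∃ γm : ℝ, CondSE μ γm := by
  classical
  obtain ⟨-, -, hid⟩ := hID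
  obtain ⟨p, hp0, hp1, hple⟩ :
      ∃ p : ℝ, 0 < p ∧ p ≤ 1 ∧ ∀ b : A, 0 < μ (cyl (fun _ : Fin 1 => b)) →
        p ≤ wp μ (fun _ : Fin 1 => b) := by
    by_cases hS : (Finset.univ.filter
        (fun b : A => 0 < μ (cyl (fun _ : Fin 1 => b)))).Nonempty
    · set S := Finset.univ.filter
        (fun b : A => 0 < μ (cyl (fun _ : Fin 1 => b))) with hSdef
      refine ⟨min 1 (S.inf' hS fun b => wp μ (fun _ : Fin 1 => b)), ?_,
        min_le_left _ _, ?_⟩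
      · refine lt_min one_pos ?_
        obtain ⟨b, hb, hbe⟩ := S.exists_mem_eq_inf' hS (fun b => wp μ (fun _ : Fin 1 => b))
        rw [hbe]
        have hbpos : 0 < μ (cyl fun _ : Fin 1 => b) := by
          have := Finset.mem_filter.1 hb
          exact this.2
        exact ENNReal.toReal_pos hbpos.ne' (measure_ne_top μ _)
      · intro b hb
        exact le_trans (min_le_right _ _)
          (Finset.inf'_le _ (Finset.mem_filter.2 ⟨Finset.mem_univ b, hb⟩))
    · exact ⟨1, one_pos, le_rfl, fun b hb =>
        absurd ⟨b, Finset.mem_filter.2 ⟨Finset.mem_univ b, hb⟩⟩ hS⟩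
  have key : ∀ n : ℕ, ∀ a : Fin (n+1) → A, 0 < μ (cyl a) →
      Real.exp (-((n : ℝ) * k 1)) * p ^ (n+1) ≤ wp μ a := by
    intro n
    induction n with
    | zero =>
        intro a ha
        have haeq : (fun _ : Fin 1 => a 0) = a := funext fun i => by
          have h0 : i = 0 := Fin.ext (by omega)
          rw [h0]
        have hb : p ≤ wp μ a := by rw [← haeq]; exact hple _ (by rwa [haeq])
        simpa using hb
    | succ n IH =>
        intro a ha
        set hd : Fin 1 → A := fun _ => a 0 with hhd
        set tl : Fin (n+1) → A := fun i => a i.succ with htl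
        have hcyl : cyl (Fin.append hd tl) = cyl a := cyl_append a
        have hhdpos : 0 < μ (cyl hd) := lt_of_lt_of_le ha (measure_mono (cyl_head_subset a))
        have htlpos : 0 < μ (cyl tl) := tail_pos hstat a ha
        have happos : 0 < μ (cyl (Fin.append hd tl)) := by rwa [hcyl]
        have hlow := (hid 1 (n+1) hd tl hhdpos htlpos).2 happos
        have hwpap : wp μ (Fin.append hd tl) = wp μ a := by unfold wp; rw [hcyl]
        have h1 : p ≤ wp μ hd := hple _ hhdpos
        have h2 := IH tl htlpos
        calc Real.exp (-(((n+1 : ℕ) : ℝ) * k 1)) * p ^ (n+1+1)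
            = Real.exp (-(k 1)) * (p * (Real.exp (-((n : ℝ) * k 1)) * p ^ (n+1))) := by
              push_cast
              rw [show (-(((n : ℝ)+1) * k 1)) = -(k 1) + -((n : ℝ) * k 1) by ring,
                Real.exp_add, pow_succ]
              ring
          _ ≤ Real.exp (-(k 1)) * (wp μ hd * wp μ tl) := by
              have w1 : (0:ℝ) ≤ wp μ hd := ENNReal.toReal_nonneg
              have w2 : (0:ℝ) ≤ wp μ tl := ENNReal.toReal_nonneg
              gcongr
              all_goals first | exact h1 | exact h2 | positivity | assumption
          _ ≤ wp μ (Fin.append hd tl) := hlow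
          _ = wp μ a := hwpap
  set K := max (k 1) 0 with hK
  refine ⟨min (Real.log p - K) (-1),
    lt_of_le_of_lt (min_le_right _ _) (by norm_num), ?_⟩
  rw [eventually_atTop]
  refine ⟨1, fun n hn a ha => ?_⟩
  obtain ⟨m, rfl⟩ : ∃ m, n = m + 1 := ⟨n - 1, by omega⟩
  have hm : (0:ℝ) ≤ (m : ℝ) := Nat.cast_nonneg m
  have c1 : Real.exp (min (Real.log p - K) (-1) * ((m+1 : ℕ) : ℝ)) ≤
      Real.exp ((Real.log p - K) * ((m+1 : ℕ) : ℝ)) := by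
    apply Real.exp_le_exp.2
    apply mul_le_mul_of_nonneg_right (min_le_left _ _)
    positivity
  have c2 : (Real.log p - K) * ((m+1 : ℕ) : ℝ) ≤
      ((m+1 : ℕ) : ℝ) * Real.log p + -((m : ℝ) * k 1) := by
    have h1 : (m : ℝ) * k 1 ≤ (m : ℝ) * K :=
      mul_le_mul_of_nonneg_left (le_max_left _ _) hm
    have h2 : (m : ℝ) * K ≤ ((m : ℝ) + 1) * K := by
      nlinarith [le_max_right (k 1) 0]
    push_cast
    nlinarith
  have c3 : Real.exp (((m+1 : ℕ) : ℝ) * Real.log p + -((m : ℝ) * k 1)) =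
      Real.exp (-((m : ℝ) * k 1)) * p ^ (m+1) := by
    rw [Real.exp_add, Real.exp_nat_mul, Real.exp_log hp0]
    ring
  calc Real.exp (min (Real.log p - K) (-1) * ((m+1 : ℕ) : ℝ))
      ≤ Real.exp ((Real.log p - K) * ((m+1 : ℕ) : ℝ)) := c1
    _ ≤ Real.exp (((m+1 : ℕ) : ℝ) * Real.log p + -((m : ℝ) * k 1)) := Real.exp_le_exp.2 c2
    _ = Real.exp (-((m : ℝ) * k 1)) * p ^ (m+1) := c3
    _ ≤ wp μ a := key m a ha


end ZM
end
end
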